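/- Let K be a field, let F ∈ K[x]^{m×n} have rank r, let s ∈ ℤ^m, and let Kb ∈ K[x]^{(m−r)×m} be an s-weak Popov basis of the left kernel Ker(F). Let π be the set of s-pivot indices of the rows of Kb and let π^c = {1,…,m} \ π. Then π^c has exactly r elements and the row submatrix F[π^c,:] ∈ K[x]^{r×n} has rank r. -/

import Mathlib

open Polynomial Matrix

noncomputable section

variable {K : Type*} [Field K]

/-- Degree of a univariate polynomial, viewed in `ℤ ∪ {⊥}`. -/
def pdegZ (p : K[X]) : WithBot ℤ := p.degree.map (Nat.cast : ℕ → ℤ)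

/-- Shifted degree (`s`-degree) of a row vector. -/
def sdeg {n : ℕ} (s : Fin n → ℤ) (p : Fin n → K[X]) : WithBot ℤ :=
  Finset.univ.sup fun j => pdegZ (p j) + (s j : WithBot ℤ)

/-- `s`-leading matrix of `P`. -/
def leadMat {m n : ℕ} (s : Fin n → ℤ) (P : Matrix (Fin m) (Fin n) K[X]) :
    Matrix (Fin m) (Fin n) K :=
  Matrix.of fun i j =>
    if pdegZ (P i j) + (s j : WithBot ℤ) = sdeg s (P i) then (P i j).leadingCoeff else 0

/-- `P` is `s`-reduced: its `s`-leading matrix has full row rank. -/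
def IsShiftReduced {m n : ℕ} (s : Fin n → ℤ) (P : Matrix (Fin m) (Fin n) K[X]) : Prop :=
  (leadMat s P).rank = m

/-- `j` is the `s`-pivot index of the row `p`: the largest index where the `s`-degree is attained. -/
def IsPivotIndex {n : ℕ} (s : Fin n → ℤ) (p : Fin n → K[X]) (j : Fin n) : Prop :=
  pdegZ (p j) + (s j : WithBot ℤ) = sdeg s p ∧
  ∀ j', j < j' → pdegZ (p j') + (s j' : WithBot ℤ) ≠ sdeg s p

/-- `P` is in `s`-weak Popov form: no zero row and strictly increasing `s`-pivot indices. -/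
def IsWeakPopov {m n : ℕ} (s : Fin n → ℤ) (P : Matrix (Fin m) (Fin n) K[X]) : Prop :=
  (∀ i, P i ≠ 0) ∧ ∃ piv : Fin m → Fin n, StrictMono piv ∧ ∀ i, IsPivotIndex s (P i) (piv i)

/-- The rows of `Kb` form a basis of the left kernel of `F`. -/
def IsKernelBasis {ℓ m : ℕ} {β : Type*} [Fintype β]
    (Kb : Matrix (Fin ℓ) (Fin m) K[X]) (F : Matrix (Fin m) β K[X]) : Prop :=
  (∀ i, Kb i ᵥ* F = 0) ∧
  LinearIndependent K[X] (fun i : Fin ℓ => Kb i) ∧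
  ∀ p : Fin m → K[X], p ᵥ* F = 0 → ∃ u : Fin ℓ → K[X], p = u ᵥ* Kb

/-- Membership in the relation module `Rel_M(F)`. -/
def InRelModule {m n : ℕ} (M : Matrix (Fin n) (Fin n) K[X])
    (F : Matrix (Fin m) (Fin n) K[X]) (p : Fin m → K[X]) : Prop :=
  ∃ q : Fin n → K[X], p ᵥ* F = q ᵥ* M

/-- The rows of `A` form a basis of the relation module `Rel_M(F)`. -/
def IsRelationBasis {ℓ m n : ℕ} (M : Matrix (Fin n) (Fin n) K[X])
    (A : Matrix (Fin ℓ) (Fin m) K[X]) (F : Matrix (Fin m) (Fin n) K[X]) : Prop :=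
  (∀ i, InRelModule M F (A i)) ∧
  LinearIndependent K[X] (fun i : Fin ℓ => A i) ∧
  ∀ p : Fin m → K[X], InRelModule M F p → ∃ u : Fin ℓ → K[X], p = u ᵥ* A

/-- Rank of a polynomial matrix: its rank over the fraction field `K(x)`. -/
def polyRank {α β : Type*} [Fintype β] (F : Matrix α β K[X]) : ℕ :=
  (F.map (algebraMap K[X] (RatFunc K))).rank

/-- Lexicographic comparison of tuples. -/
def lexLE {r n : ℕ} (a b : Fin r → Fin n) : Prop :=
  ∀ i, (∀ k, k < i → a k = b k) → a i ≤ b i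

/-- `j` lists the column rank profile of `F`: the lexicographically smallest strictly
increasing tuple of `rank F` column indices selecting columns of full rank. -/
def IsColRankProfile {α : Type*} {n r : ℕ} (F : Matrix α (Fin n) K[X])
    (j : Fin r → Fin n) : Prop :=
  StrictMono j ∧ polyRank F = r ∧ polyRank (F.submatrix id j) = r ∧
  ∀ j' : Fin r → Fin n, StrictMono j' → polyRank (F.submatrix id j') = r → lexLE j j'

/-!
If `p ∈ Ker(F)` is supported on `π^c`, then `p = u Kb` and `u Kb` vanishes in every pivot column.
The weak Popov shape makes the pivot columns "predict" the `s`-degree of `u Kb`, so this forces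
`u = 0`, hence `p = 0`. Thus the `|π^c| = m - (m - r) = r` rows of `F[π^c,:]` are independent
over `K[x]`, and therefore over `K(x)`.
-/

lemma pdegZ_eq_bot_iff {p : K[X]} : pdegZ p = ⊥ ↔ p = 0 := by
  rw [pdegZ, WithBot.map_eq_bot_iff, degree_eq_bot]

lemma pdegZ_mul (p q : K[X]) : pdegZ (p * q) = pdegZ p + pdegZ q := by
  rw [pdegZ, pdegZ, pdegZ, degree_mul]
  exact WithBot.map_add (Nat.castAddMonoidHom ℤ) _ _

lemma pdegZ_lt_pdegZ_iff {p q : K[X]} : pdegZ p < pdegZ q ↔ p.degree < q.degree :=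
  (Nat.strictMono_cast (α := ℤ)).withBot_map.lt_iff_lt

lemma pdegZ_add_le_sdeg {n : ℕ} (s : Fin n → ℤ) (p : Fin n → K[X]) (j : Fin n) :
    pdegZ (p j) + (s j : WithBot ℤ) ≤ sdeg s p :=
  Finset.le_sup (f := fun j => pdegZ (p j) + (s j : WithBot ℤ)) (Finset.mem_univ j)

lemma pdegZ_mul_add_le_sdeg {n : ℕ} (s : Fin n → ℤ) (q : K[X]) (p : Fin n → K[X])
    (j : Fin n) :
    pdegZ (q * p j) + (s j : WithBot ℤ) ≤ pdegZ q + sdeg s p := by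
  rw [pdegZ_mul, add_assoc]
  exact add_le_add_right (pdegZ_add_le_sdeg s p j) _

lemma sdeg_ne_bot {n : ℕ} (s : Fin n → ℤ) {p : Fin n → K[X]} (hp : p ≠ 0) :
    sdeg s p ≠ ⊥ := by
  obtain ⟨j, hj⟩ := Function.ne_iff.1 hp
  intro hsdeg
  have hle := pdegZ_add_le_sdeg s p j
  rw [hsdeg, le_bot_iff, WithBot.add_eq_bot, pdegZ_eq_bot_iff] at hle
  exact hle.elim hj WithBot.coe_ne_bot

namespace IsPivotIndex

variable {n : ℕ} {s : Fin n → ℤ} {p : Fin n → K[X]} {j : Fin n}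

lemma apply_ne_zero (h : IsPivotIndex s p j) (hp : p ≠ 0) : p j ≠ 0 := by
  intro hpj
  apply sdeg_ne_bot s hp
  rw [← h.1, hpj, pdegZ_eq_bot_iff.2 rfl, WithBot.bot_add]

lemma pdegZ_mul_add_eq (h : IsPivotIndex s p j) (q : K[X]) :
    pdegZ (q * p j) + (s j : WithBot ℤ) = pdegZ q + sdeg s p := by
  rw [pdegZ_mul, add_assoc, h.1]

lemma pdegZ_mul_add_lt (h : IsPivotIndex s p j) {q : K[X]} (hq : q ≠ 0) {j' : Fin n}
    (hjj' : j < j') : pdegZ (q * p j') + (s j' : WithBot ℤ) < pdegZ q + sdeg s p := by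
  rw [pdegZ_mul, add_assoc]
  refine WithBot.add_lt_add_left (mt pdegZ_eq_bot_iff.1 hq) ?_
  exact lt_of_le_of_ne (pdegZ_add_le_sdeg s p j') (h.2 j' hjj')

end IsPivotIndex

lemma Polynomial.sum_ne_zero_of_degree_lt {R ι : Type*} [Semiring R] [DecidableEq ι]
    {t : Finset ι} {f : ι → R[X]} {k : ι} (hk : k ∈ t) (hfk : f k ≠ 0)
    (hlt : ∀ i ∈ t, i ≠ k → (f i).degree < (f k).degree) : ∑ i ∈ t, f i ≠ 0 := by
  have hrest : (∑ i ∈ t.erase k, f i).degree < (f k).degree :=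
    (degree_sum_le _ _).trans_lt <|
      (Finset.sup_lt_iff (bot_lt_iff_ne_bot.2 (degree_ne_bot.2 hfk))).2
        fun i hi => hlt i (Finset.mem_of_mem_erase hi) (Finset.ne_of_mem_erase hi)
  rw [← Finset.add_sum_erase t f hk]
  intro h0
  have hdeg := degree_add_eq_left_of_degree_lt hrest
  rw [h0, degree_zero, eq_comm, degree_eq_bot] at hdeg
  exact hfk hdeg

/- Predictable degree at the pivots: among the rows with `u i ≠ 0`, take `k` maximising
`deg u_k + rdeg_s (Kb k)`, and the largest such index. In column `piv k` the term of row `k`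
then has strictly larger `s`-shifted degree than every other term. -/
lemma eq_zero_of_vecMul_apply_pivot_eq_zero {ι : Type*} [Fintype ι] [LinearOrder ι] {m : ℕ}
    {s : Fin m → ℤ} {Kb : Matrix ι (Fin m) K[X]} {piv : ι → Fin m} (hmono : StrictMono piv)
    (hnz : ∀ i, Kb i ≠ 0) (hpiv : ∀ i, IsPivotIndex s (Kb i) (piv i)) {u : ι → K[X]}
    (hu : ∀ i, (u ᵥ* Kb) (piv i) = 0) : u = 0 := by
  classical
  by_contra hu0
  set D : ι → WithBot ℤ := fun i => pdegZ (u i) + sdeg s (Kb i)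
  set S := Finset.univ.filter fun i => u i ≠ 0
  have hSne : S.Nonempty := by
    obtain ⟨i, hi⟩ := Function.ne_iff.1 hu0
    exact ⟨i, Finset.mem_filter.2 ⟨Finset.mem_univ i, hi⟩⟩
  obtain ⟨k, hkS, hkmax⟩ := S.exists_max_image (fun i => toLex (D i, i)) hSne
  have huk : u k ≠ 0 := (Finset.mem_filter.1 hkS).2
  have hterm_lt : ∀ i, i ≠ k →
      pdegZ (u i * Kb i (piv k)) + (s (piv k) : WithBot ℤ) < pdegZ (u k * Kb k (piv k)) +
        (s (piv k) : WithBot ℤ) := by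
    intro i hik
    rw [(hpiv k).pdegZ_mul_add_eq]
    by_cases hui : u i = 0
    · rw [hui, zero_mul, pdegZ_eq_bot_iff.2 rfl, WithBot.bot_add, bot_lt_iff_ne_bot, ne_eq,
        WithBot.add_eq_bot, not_or, pdegZ_eq_bot_iff]
      exact ⟨huk, sdeg_ne_bot s (hnz k)⟩
    have hlex := lt_of_le_of_ne (hkmax i (Finset.mem_filter.2 ⟨Finset.mem_univ i, hui⟩))
      fun h => hik (congrArg Prod.snd (toLex.injective h))
    rcases Prod.Lex.toLex_lt_toLex.1 hlex with hD | ⟨hD, hik'⟩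
    · exact (pdegZ_mul_add_le_sdeg s (u i) (Kb i) (piv k)).trans_lt hD
    · exact ((hpiv i).pdegZ_mul_add_lt hui (hmono hik')).trans_eq hD
  refine Polynomial.sum_ne_zero_of_degree_lt (f := fun i => u i * Kb i (piv k))
    (Finset.mem_univ k) (mul_ne_zero huk ((hpiv k).apply_ne_zero (hnz k)))
    (fun i _ hik => ?_) ?_
  · exact pdegZ_lt_pdegZ_iff.1
      ((WithBot.add_lt_add_iff_right WithBot.coe_ne_bot).1 (hterm_lt i hik))
  · simpa [vecMul, dotProduct] using hu k

lemma polyRank_eq_card_of_linearIndependent {α β : Type*} [Fintype α] [Fintype β]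
    {F : Matrix α β K[X]} (hF : LinearIndependent K[X] fun i => F i) :
    polyRank F = Fintype.card α := by
  refine LinearIndependent.rank_matrix ?_
  rw [← LinearIndependent.iff_fractionRing K[X] (RatFunc K)]
  refine hF.map' ((Algebra.linearMap K[X] (RatFunc K)).compLeft β) (LinearMap.ker_eq_bot.2 ?_)
  exact (IsFractionRing.injective K[X] (RatFunc K)).comp_left

lemma linearIndependent_rows_compl_pivots {ι : Type*} [Fintype ι] [LinearOrder ι] {m : ℕ}
    {β : Type*} [Fintype β] {F : Matrix (Fin m) β K[X]} {s : Fin m → ℤ}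
    {Kb : Matrix ι (Fin m) K[X]}
    (hspan : ∀ p : Fin m → K[X], p ᵥ* F = 0 → ∃ u, p = u ᵥ* Kb)
    {piv : ι → Fin m} (hmono : StrictMono piv) (hnz : ∀ i, Kb i ≠ 0)
    (hpiv : ∀ i, IsPivotIndex s (Kb i) (piv i)) :
    LinearIndependent K[X] fun i : {x // x ∈ (Finset.univ.image piv)ᶜ} => F i := by
  classical
  refine (linearIndepOn_iff (R := K[X]) (v := fun i => F i)
    (s := ↑((Finset.univ.image piv)ᶜ))).2 fun l hl hl0 => ?_
  rw [Finsupp.linearCombination_apply, Finsupp.sum_fintype _ _ (by simp),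
    ← vecMul_eq_sum] at hl0
  obtain ⟨u, hlu⟩ := hspan l hl0
  have hu : u = 0 := eq_zero_of_vecMul_apply_pivot_eq_zero hmono hnz hpiv fun i => by
    rw [← hlu]
    exact (Finsupp.mem_supported' _ _).1 hl _ (by simp)
  ext1 j
  simpa [hu] using congrFun hlu j

theorem stmt8_general {K : Type*} [Field K] {m n r : ℕ} (hr : r ≤ m)
    (F : Matrix (Fin m) (Fin n) K[X])
    (s : Fin m → ℤ) (Kb : Matrix (Fin (m - r)) (Fin m) K[X])
    (hkb : IsKernelBasis Kb F)
    (piv : Fin (m - r) → Fin m) (hmono : StrictMono piv)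
    (hnz : ∀ i, Kb i ≠ 0) (hpiv : ∀ i, IsPivotIndex s (Kb i) (piv i)) :
    ((Finset.univ.image piv)ᶜ).card = r ∧
    polyRank (F.submatrix
      (fun i : {x // x ∈ (Finset.univ.image piv)ᶜ} => (i : Fin m)) id) = r := by
  have hcard : ((Finset.univ.image piv)ᶜ).card = r := by
    rw [Finset.card_compl, Finset.card_image_of_injective _ hmono.injective, Finset.card_univ,
      Fintype.card_fin, Fintype.card_fin, Nat.sub_sub_self hr]
  refine ⟨hcard, ?_⟩
  rw [polyRank_eq_card_of_linearIndependent (F := F.submatrix _ id)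
    (linearIndependent_rows_compl_pivots hkb.2.2 hmono hnz hpiv), Fintype.card_coe, hcard]

/-- The non-pivot rows of a weak Popov kernel basis locate `r` independent rows of `F`. -/
theorem stmt8 {K : Type*} [Field K] {m n r : ℕ} (hr : r ≤ m)
    (F : Matrix (Fin m) (Fin n) K[X]) (hF : polyRank F = r)
    (s : Fin m → ℤ) (Kb : Matrix (Fin (m - r)) (Fin m) K[X])
    (hkb : IsKernelBasis Kb F)
    (piv : Fin (m - r) → Fin m) (hmono : StrictMono piv)
    (hnz : ∀ i, Kb i ≠ 0) (hpiv : ∀ i, IsPivotIndex s (Kb i) (piv i)) :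
    ((Finset.univ.image piv)ᶜ).card = r ∧
    polyRank (F.submatrix
      (fun i : {x // x ∈ (Finset.univ.image piv)ᶜ} => (i : Fin m)) id) = r :=
  stmt8_general hr F s Kb hkb piv hmono hnz hpiv

end
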